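/- There exist absolute constants c, C > 0 (independent of q, n, d) such that for every prime power q and all integers 1 ≤ d ≤ n, the number of monic polynomials F of degree n over F_q all of whose monic irreducible factors have degree at least d satisfies c · q^n/d ≤ #{F ∈ M_n : deg P⁻(F) ≥ d} ≤ C · q^n/d. -/

import Mathlib

open Polynomial

/-- Monic polynomials of degree `n` over `F_q` all of whose monic irreducible factors have
degree at least `d` (vacuously true for `F = 1`). -/
def RoughSet (Fq : Type) [Field Fq] (n d : ℕ) : Set (Polynomial Fq) :=
  {F | F.Monic ∧ F.natDegree = n ∧
    ∀ P : Polynomial Fq, P.Monic → Irreducible P → P ∣ F → d ≤ P.natDegree}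

open Finset UniqueFactorizationMonoid
open scoped Classical

namespace RoughAux

variable (Fq : Type) [Field Fq] [Fintype Fq]

noncomputable def monics (m : ℕ) : Finset (Polynomial Fq) :=
  (Finset.univ : Finset (Fin m → Fq)).image
    (fun c => X ^ m + ∑ i : Fin m, C (c i) * X ^ (i : ℕ))

variable {Fq}

set_option linter.unusedSectionVars false in
lemma lowdeg {m : ℕ} (c : Fin m → Fq) :
    (∑ i : Fin m, C (c i) * X ^ (i : ℕ)).degree < (m : WithBot ℕ) := by
  apply lt_of_le_of_lt (Polynomial.degree_sum_le _ _)
  rw [Finset.sup_lt_iff (by exact_mod_cast WithBot.bot_lt_coe m)]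
  intro i _
  refine lt_of_le_of_lt (Polynomial.degree_C_mul_X_pow_le _ _) ?_
  exact_mod_cast i.2

lemma mem_monics {m : ℕ} {F : Polynomial Fq} :
    F ∈ monics Fq m ↔ F.Monic ∧ F.natDegree = m := by
  constructor
  · rintro hF
    simp only [monics, Finset.mem_image] at hF
    obtain ⟨c, -, rfl⟩ := hF
    have hm : (X ^ m + ∑ i : Fin m, C (c i) * X ^ (i : ℕ)).Monic :=
      monic_X_pow_add (lowdeg c)
    refine ⟨hm, ?_⟩
    rw [add_comm, natDegree_add_eq_right_of_degree_lt, natDegree_X_pow]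
    rw [degree_X_pow]
    exact lowdeg c
  · rintro ⟨hF, rfl⟩
    simp only [monics, Finset.mem_image]
    refine ⟨fun i => F.coeff i, Finset.mem_univ _, ?_⟩
    conv_rhs => rw [hF.as_sum]
    rw [Finset.sum_range fun i => C (F.coeff i) * X ^ i]

set_option linter.unusedSectionVars false in
lemma coeff_lt {m : ℕ} (c : Fin m → Fq) {j : ℕ} (hj : j < m) :
    (X ^ m + ∑ i : Fin m, C (c i) * X ^ (i : ℕ)).coeff j = c ⟨j, hj⟩ := by
  rw [coeff_add, coeff_X_pow, if_neg (Nat.ne_of_lt hj), finset_sum_coeff]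
  simp only [coeff_C_mul_X_pow]
  rw [Finset.sum_eq_single (⟨j, hj⟩ : Fin m)]
  · simp
  · intro i _ hne
    rw [if_neg]
    intro h
    exact hne (by ext; simp [h])
  · simp

lemma card_monics (m : ℕ) : (monics Fq m).card = Fintype.card Fq ^ m := by
  rw [monics, Finset.card_image_of_injective _ ?_, Finset.card_univ, Fintype.card_fun,
    Fintype.card_fin]
  intro c c' h
  funext i
  have := congrArg (fun p => Polynomial.coeff p (i : ℕ)) h
  simpa [coeff_lt c i.2, coeff_lt c' i.2] using this


set_option linter.unusedSectionVars false

lemma Monic.eq_one_of_natDegree_zero {F : Polynomial Fq} (hF : F.Monic)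
    (h : F.natDegree = 0) : F = 1 := by
  have := Polynomial.eq_C_of_natDegree_eq_zero h
  rwa [← h, ← Polynomial.leadingCoeff, hF.leadingCoeff, map_one] at this

lemma quot_monic {F G H : Polynomial Fq} (hF : F.Monic) (hG : G.Monic) (h : F = G * H) :
    H.Monic ∧ H.natDegree = F.natDegree - G.natDegree := by
  have hH0 : H ≠ 0 := by rintro rfl; rw [mul_zero] at h; exact hF.ne_zero h
  have hlc : H.Monic := by
    have := congrArg Polynomial.leadingCoeff h
    rw [Polynomial.leadingCoeff_mul, hF.leadingCoeff, hG.leadingCoeff, one_mul] at this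
    exact this.symm
  refine ⟨hlc, ?_⟩
  rw [h, hG.natDegree_mul hlc]
  omega

lemma card_dvd_filter (m : ℕ) {G : Polynomial Fq} (hG : G.Monic) (h : G.natDegree ≤ m) :
    ((monics Fq m).filter (fun F => G ∣ F)).card = Fintype.card Fq ^ (m - G.natDegree) := by
  rw [← card_monics (Fq := Fq) (m - G.natDegree)]
  apply Finset.card_bij (fun F _ => F /ₘ G)
  · intro F hF
    rw [Finset.mem_filter, mem_monics] at hF
    obtain ⟨⟨hFm, hFd⟩, hdvd⟩ := hF
    have hmod : F %ₘ G = 0 := (Polynomial.modByMonic_eq_zero_iff_dvd hG).2 hdvd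
    have heq : F = G * (F /ₘ G) := by
      conv_lhs => rw [← Polynomial.modByMonic_add_div F G]
      rw [hmod, zero_add]
    obtain ⟨h1, h2⟩ := quot_monic hFm hG heq
    rw [mem_monics]
    exact ⟨h1, by rw [h2, hFd]⟩
  · intro F1 hF1 F2 hF2 heq
    rw [Finset.mem_filter, mem_monics] at hF1 hF2
    have e1 : F1 = G * (F1 /ₘ G) := by
      conv_lhs => rw [← Polynomial.modByMonic_add_div F1 G]
      rw [(Polynomial.modByMonic_eq_zero_iff_dvd hG).2 hF1.2, zero_add]
    have e2 : F2 = G * (F2 /ₘ G) := by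
      conv_lhs => rw [← Polynomial.modByMonic_add_div F2 G]
      rw [(Polynomial.modByMonic_eq_zero_iff_dvd hG).2 hF2.2, zero_add]
    rw [e1, e2, heq]
  · intro H hH
    rw [mem_monics] at hH
    refine ⟨G * H, ?_, ?_⟩
    · rw [Finset.mem_filter, mem_monics]
      refine ⟨⟨hG.mul hH.1, ?_⟩, Dvd.intro _ rfl⟩
      rw [hG.natDegree_mul hH.1, hH.2]
      omega
    · rw [Polynomial.mul_divByMonic_cancel_left _ hG]

noncomputable def irreds (Fq : Type) [Field Fq] [Fintype Fq] (k : ℕ) : Finset (Polynomial Fq) :=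
  (monics Fq k).filter Irreducible
noncomputable def pik (Fq : Type) [Field Fq] [Fintype Fq] (k : ℕ) : ℕ := (irreds Fq k).card

def IsRough (d : ℕ) (F : Polynomial Fq) : Prop :=
  ∀ P : Polynomial Fq, P.Monic → Irreducible P → P ∣ F → d ≤ P.natDegree

noncomputable def roughs (Fq : Type) [Field Fq] [Fintype Fq] (m d : ℕ) : Finset (Polynomial Fq) :=
  (monics Fq m).filter (IsRough d)
noncomputable def Nr (Fq : Type) [Field Fq] [Fintype Fq] (m d : ℕ) : ℕ := (roughs Fq m d).card

lemma mem_irreds {k : ℕ} {P : Polynomial Fq} :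
    P ∈ irreds Fq k ↔ P.Monic ∧ P.natDegree = k ∧ Irreducible P := by
  rw [irreds, Finset.mem_filter, mem_monics]; tauto

lemma mem_roughs {m d : ℕ} {F : Polynomial Fq} :
    F ∈ roughs Fq m d ↔ F.Monic ∧ F.natDegree = m ∧ IsRough d F := by
  rw [roughs, Finset.mem_filter, mem_monics]; tauto

lemma Nr_zero (d : ℕ) : Nr Fq 0 d = 1 := by
  rw [Nr]
  convert Finset.card_singleton (1 : Polynomial Fq)
  ext F
  rw [mem_roughs, Finset.mem_singleton]
  constructor
  · rintro ⟨h1, h2, -⟩; exact Monic.eq_one_of_natDegree_zero h1 h2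
  · rintro rfl
    refine ⟨monic_one, natDegree_one, fun P _ hPi hPd => ?_⟩
    exact absurd (isUnit_of_dvd_one hPd) hPi.not_isUnit

lemma Nr_small {m d : ℕ} (h1 : 1 ≤ m) (h2 : m < d) : Nr Fq m d = 0 := by
  rw [Nr, Finset.card_eq_zero]
  ext F
  simp only [mem_roughs, Finset.notMem_empty, iff_false]
  rintro ⟨hFm, hFd, hFr⟩
  have hne : ¬IsUnit F := not_isUnit_of_natDegree_pos F (by omega)
  obtain ⟨P, hPm, hPi, hPd⟩ := Polynomial.exists_monic_irreducible_factor F hne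
  have := natDegree_le_of_dvd hPd hFm.ne_zero
  have := hFr P hPm hPi hPd
  omega

lemma rough_irreducible {m d : ℕ} (h1 : 1 ≤ m) (h2 : m < 2 * d) {F : Polynomial Fq}
    (hF : F ∈ roughs Fq m d) : Irreducible F := by
  rw [mem_roughs] at hF
  obtain ⟨hFm, hFd, hFr⟩ := hF
  have hne : ¬IsUnit F := not_isUnit_of_natDegree_pos F (by omega)
  obtain ⟨P, hPm, hPi, hPd⟩ := Polynomial.exists_monic_irreducible_factor F hne
  have hd : d ≤ P.natDegree := hFr P hPm hPi hPd
  obtain ⟨H, hH⟩ := hPd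
  obtain ⟨hHm, hHd⟩ := quot_monic hFm hPm hH
  have hPle : P.natDegree ≤ m := hFd ▸ natDegree_le_of_dvd ⟨H, hH⟩ hFm.ne_zero
  have hH1 : H = 1 := by
    by_contra hne1
    have : 0 < H.natDegree := by
      rcases Nat.eq_zero_or_pos H.natDegree with h | h
      · exact absurd (Monic.eq_one_of_natDegree_zero hHm h) hne1
      · exact h
    obtain ⟨Q, hQm, hQi, hQd⟩ := Polynomial.exists_monic_irreducible_factor H
      (not_isUnit_of_natDegree_pos H this)
    have h3 : d ≤ Q.natDegree := hFr Q hQm hQi (hQd.trans ⟨P, by rw [hH, mul_comm]⟩)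
    have h4 : Q.natDegree ≤ H.natDegree := natDegree_le_of_dvd hQd hHm.ne_zero
    omega
  rw [hH1, mul_one] at hH
  exact hH ▸ hPi

lemma roughs_subset_irreds {m d : ℕ} (h1 : 1 ≤ m) (h2 : m < 2 * d) :
    roughs Fq m d ⊆ irreds Fq m := by
  intro F hF
  have := rough_irreducible h1 h2 hF
  rw [mem_roughs] at hF
  rw [mem_irreds]
  tauto

lemma irreds_subset_roughs {m d : ℕ} (h : d ≤ m) : irreds Fq m ⊆ roughs Fq m d := by
  intro P hP
  rw [mem_irreds] at hP
  obtain ⟨hPm, hPd, hPi⟩ := hP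
  rw [mem_roughs]
  refine ⟨hPm, hPd, fun Q hQm hQi hQd => ?_⟩
  have : Q = P := Polynomial.eq_of_monic_of_associated hQm hPm (hQi.associated_of_dvd hPi hQd)
  rw [this, hPd]; exact h

lemma roughs_one (m : ℕ) : roughs Fq m 1 = monics Fq m := by
  ext F
  rw [mem_roughs, mem_monics]
  refine ⟨fun h => ⟨h.1, h.2.1⟩, fun h => ⟨h.1, h.2, fun P _ hPi _ => hPi.natDegree_pos⟩⟩



open UniqueFactorizationMonoid

noncomputable def bigIrreds (Fq : Type) [Field Fq] [Fintype Fq] (m : ℕ) :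
    Finset (Polynomial Fq) :=
  (Icc 1 m).biUnion (irreds Fq)

lemma mem_bigIrreds {m : ℕ} {P : Polynomial Fq} :
    P ∈ bigIrreds Fq m ↔ P.Monic ∧ Irreducible P ∧ 1 ≤ P.natDegree ∧ P.natDegree ≤ m := by
  simp only [bigIrreds, Finset.mem_biUnion, Finset.mem_Icc, mem_irreds]
  constructor
  · rintro ⟨k, ⟨hk1, hk2⟩, h1, rfl, h3⟩; exact ⟨h1, h3, hk1, hk2⟩
  · rintro ⟨h1, h2, h3, h4⟩; exact ⟨P.natDegree, ⟨h3, h4⟩, h1, rfl, h2⟩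

lemma monic_of_nf {F P : Polynomial Fq} (hP : P ∈ normalizedFactors F) : P.Monic := by
  have h1 := normalize_normalized_factor P hP
  have h2 : P ≠ 0 := fun h => (zero_notMem_normalizedFactors F) (h ▸ hP)
  have := Polynomial.monic_normalize (p := P) h2
  rwa [h1] at this

lemma pow_dvd_iff_le_count {P F : Polynomial Fq} (hPm : P.Monic) (hPi : Irreducible P)
    (hF : F ≠ 0) (j : ℕ) :
    P ^ j ∣ F ↔ j ≤ (normalizedFactors F).count P := by
  rw [pow_dvd_iff_le_emultiplicity,
    le_emultiplicity_iff_replicate_le_normalizedFactors hPi hF,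
    ← Multiset.le_count_iff_replicate_le, hPm.normalize_eq_self]

lemma nf_prod {F : Polynomial Fq} (hF : F.Monic) : (normalizedFactors F).prod = F := by
  have hmon : (normalizedFactors F).prod.Monic := by
    have := Polynomial.monic_multiset_prod_of_monic (normalizedFactors F) id
      (fun P hP => monic_of_nf hP)
    rwa [Multiset.map_id] at this
  exact Polynomial.eq_of_monic_of_associated hmon hF (prod_normalizedFactors hF.ne_zero)

lemma sum_deg_nf {F : Polynomial Fq} (hF : F.Monic) :
    ((normalizedFactors F).map natDegree).sum = F.natDegree := by
  conv_rhs => rw [← nf_prod hF]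
  rw [Polynomial.natDegree_multiset_prod_of_monic _ (fun P hP => monic_of_nf hP)]

lemma card_nf_le {F : Polynomial Fq} (hF : F.Monic) :
    Multiset.card (normalizedFactors F) ≤ F.natDegree := by
  calc Multiset.card (normalizedFactors F)
      = ((normalizedFactors F).map (fun _ => (1 : ℕ))).sum := by
        simp [Multiset.map_const', Multiset.sum_replicate]
    _ ≤ ((normalizedFactors F).map natDegree).sum :=
        Multiset.sum_map_le_sum_map _ _
          (fun P hP => (irreducible_of_normalized_factor P hP).natDegree_pos)
    _ = F.natDegree := sum_deg_nf hF

lemma perF {m : ℕ} {F : Polynomial Fq} (hFm : F.Monic) (hFd : F.natDegree = m) :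
    m = ∑ P ∈ bigIrreds Fq m, ∑ j ∈ Icc 1 m, if P ^ j ∣ F then P.natDegree else 0 := by
  have hF0 : F ≠ 0 := hFm.ne_zero
  have hcard : ∀ P : Polynomial Fq, (normalizedFactors F).count P ≤ m := fun P =>
    le_trans (Multiset.count_le_card _ _) (by rw [← hFd]; exact card_nf_le hFm)
  have inner : ∀ P ∈ bigIrreds Fq m,
      (∑ j ∈ Icc 1 m, if P ^ j ∣ F then P.natDegree else 0)
      = (normalizedFactors F).count P * P.natDegree := by
    intro P hP
    rw [mem_bigIrreds] at hP
    rw [← Finset.sum_filter]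
    have heq : (Icc 1 m).filter (fun j => P ^ j ∣ F)
        = Icc 1 ((normalizedFactors F).count P) := by
      ext j
      simp only [Finset.mem_filter, Finset.mem_Icc,
        pow_dvd_iff_le_count hP.1 hP.2.1 hF0]
      have := hcard P
      omega
    rw [heq, Finset.sum_const, Nat.card_Icc, smul_eq_mul, Nat.add_sub_cancel]
  rw [Finset.sum_congr rfl inner]
  have hsub : (normalizedFactors F).toFinset ⊆ bigIrreds Fq m := by
    intro P hP
    rw [Multiset.mem_toFinset] at hP
    have hirr := irreducible_of_normalized_factor P hP
    rw [mem_bigIrreds]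
    exact ⟨monic_of_nf hP, hirr, hirr.natDegree_pos,
      hFd ▸ natDegree_le_of_dvd (dvd_of_mem_normalizedFactors hP) hF0⟩
  rw [← Finset.sum_subset hsub (fun P _ hP => by
    rw [Multiset.mem_toFinset] at hP
    rw [Multiset.count_eq_zero_of_notMem hP, zero_mul])]
  have := Finset.sum_multiset_map_count (normalizedFactors F) natDegree
  rw [sum_deg_nf hFm, hFd] at this
  rw [this]
  simp [smul_eq_mul]

lemma key_identity (m : ℕ) (A : Finset (Polynomial Fq)) (hA : A ⊆ monics Fq m) :
    m * A.card = ∑ P ∈ bigIrreds Fq m, ∑ j ∈ Icc 1 m,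
      P.natDegree * (A.filter (fun F => P ^ j ∣ F)).card := by
  have h1 : ∀ F ∈ A, F.Monic ∧ F.natDegree = m := fun F hF => mem_monics.1 (hA hF)
  calc m * A.card = ∑ _F ∈ A, m := by rw [Finset.sum_const, smul_eq_mul, mul_comm]
    _ = ∑ F ∈ A, ∑ P ∈ bigIrreds Fq m, ∑ j ∈ Icc 1 m,
        if P ^ j ∣ F then P.natDegree else 0 :=
      Finset.sum_congr rfl (fun F hF => perF (h1 F hF).1 (h1 F hF).2)
    _ = ∑ P ∈ bigIrreds Fq m, ∑ F ∈ A, ∑ j ∈ Icc 1 m,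
        if P ^ j ∣ F then P.natDegree else 0 := Finset.sum_comm
    _ = ∑ P ∈ bigIrreds Fq m, ∑ j ∈ Icc 1 m, ∑ F ∈ A,
        if P ^ j ∣ F then P.natDegree else 0 :=
      Finset.sum_congr rfl (fun P _ => Finset.sum_comm)
    _ = ∑ P ∈ bigIrreds Fq m, ∑ j ∈ Icc 1 m,
        P.natDegree * (A.filter (fun F => P ^ j ∣ F)).card := by
      refine Finset.sum_congr rfl (fun P _ => Finset.sum_congr rfl (fun j _ => ?_))
      rw [← Finset.sum_filter, Finset.sum_const, smul_eq_mul, mul_comm]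

lemma sum_bigIrreds_eq {M : Type} [AddCommMonoid M] (m : ℕ) (f : Polynomial Fq → M) :
    ∑ P ∈ bigIrreds Fq m, f P = ∑ k ∈ Icc 1 m, ∑ P ∈ irreds Fq k, f P := by
  apply Finset.sum_biUnion
  intro k1 hk1 k2 hk2 hne
  rw [Function.onFun, Finset.disjoint_left]
  intro P h1 h2
  rw [mem_irreds] at h1 h2
  exact hne (h1.2.1 ▸ h2.2.1 ▸ rfl)

lemma sum_irreds_const {M : Type} [AddCommMonoid M] (k : ℕ) (g : ℕ → M) :
    ∑ P ∈ irreds Fq k, g P.natDegree = pik Fq k • g k := by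
  rw [Finset.sum_congr rfl (fun P hP => by rw [(mem_irreds.1 hP).2.1]), Finset.sum_const, pik]


noncomputable def W (Fq : Type) [Field Fq] [Fintype Fq] (m k : ℕ) : ℕ :=
  ∑ j ∈ Icc 1 m, if j * k ≤ m then k * Fintype.card Fq ^ (m - j * k) else 0

lemma I1 (m : ℕ) : m * Fintype.card Fq ^ m = ∑ k ∈ Icc 1 m, pik Fq k * W Fq m k := by
  have h := key_identity m (monics Fq m) (Finset.Subset.refl _)
  rw [card_monics] at h
  rw [h, sum_bigIrreds_eq]
  refine Finset.sum_congr rfl (fun k hk => ?_)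
  have : ∀ P ∈ irreds Fq k, (∑ j ∈ Icc 1 m,
      P.natDegree * ((monics Fq m).filter (fun F => P ^ j ∣ F)).card)
      = ∑ j ∈ Icc 1 m, (if j * P.natDegree ≤ m
          then P.natDegree * Fintype.card Fq ^ (m - j * P.natDegree) else 0) := by
    intro P hP
    rw [mem_irreds] at hP
    refine Finset.sum_congr rfl (fun j hj => ?_)
    by_cases hle : j * P.natDegree ≤ m
    · rw [if_pos hle, card_dvd_filter m (hP.1.pow j) (by rwa [natDegree_pow])]
      rw [natDegree_pow]
    · rw [if_neg hle]
      have : (monics Fq m).filter (fun F => P ^ j ∣ F) = ∅ := by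
        ext F
        simp only [Finset.mem_filter, Finset.notMem_empty, iff_false, not_and]
        intro hF hdvd
        rw [mem_monics] at hF
        have := natDegree_le_of_dvd hdvd hF.1.ne_zero
        rw [natDegree_pow, hF.2] at this
        omega
      rw [this]
      simp
  rw [Finset.sum_congr rfl this]
  have := sum_irreds_const (Fq := Fq) k (fun t => ∑ j ∈ Icc 1 m,
    if j * t ≤ m then t * Fintype.card Fq ^ (m - j * t) else 0)
  rw [this, smul_eq_mul, W]

lemma W_zero_top {m : ℕ} (hm : 1 ≤ m) : W Fq (m - 1) m = 0 := by
  rw [W]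
  apply Finset.sum_eq_zero
  intro j hj
  rw [Finset.mem_Icc] at hj
  rw [if_neg]
  have h1 : m ≤ j * m := Nat.le_mul_of_pos_left m (by omega)
  omega

lemma W_rec {m k : ℕ} (hm : 1 ≤ m) (hk : 1 ≤ k) :
    W Fq m k = Fintype.card Fq * W Fq (m - 1) k + (if k ∣ m then k else 0) := by
  have hstep : W Fq m k = ∑ j ∈ Icc 1 m,
      ((if j * k ≤ m - 1 then k * Fintype.card Fq ^ (m - j * k) else 0)
        + (if j * k = m then k else 0)) := by
    rw [W]
    refine Finset.sum_congr rfl (fun j hj => ?_)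
    rw [Finset.mem_Icc] at hj
    rcases Nat.lt_trichotomy (j * k) m with h | h | h
    · rw [if_pos h.le, if_pos (by omega), if_neg (by omega), add_zero]
    · rw [if_pos h.le, if_neg (by omega), if_pos h, zero_add, h, Nat.sub_self, pow_zero, mul_one]
    · rw [if_neg (by omega), if_neg (by omega), if_neg (by omega), add_zero]
  rw [hstep, Finset.sum_add_distrib]
  congr 1
  · -- first part equals q * W (m-1) k
    rw [W, Finset.mul_sum]
    rw [← Finset.sum_subset (Finset.Icc_subset_Icc_right (by omega : m - 1 ≤ m))]
    · refine Finset.sum_congr rfl (fun j hj => ?_)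
      by_cases h : j * k ≤ m - 1
      · rw [if_pos h, if_pos h]
        have : m - j * k = (m - 1 - j * k) + 1 := by omega
        rw [this, pow_succ]
        ring
      · rw [if_neg h, if_neg h, mul_zero]
    · intro j hj hj'
      rw [Finset.mem_Icc] at hj
      rw [Finset.mem_Icc] at hj'
      have hjm : j = m := by omega
      subst hjm
      rw [if_neg]
      have h1 : j ≤ j * k := Nat.le_mul_of_pos_right j (by omega)
      omega
  · -- divisor part
    by_cases h : k ∣ m
    · rw [if_pos h, ← Finset.sum_filter]
      have : (Icc 1 m).filter (fun j => j * k = m) = {m / k} := by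
        ext j
        simp only [Finset.mem_filter, Finset.mem_Icc, Finset.mem_singleton]
        constructor
        · rintro ⟨⟨h1, h2⟩, h3⟩
          exact (Nat.div_eq_of_eq_mul_left (by omega) h3.symm).symm
        · rintro rfl
          have h1 : m / k * k = m := Nat.div_mul_cancel h
          have h2 : 1 ≤ m / k := Nat.one_le_div_iff (by omega) |>.2 (Nat.le_of_dvd (by omega) h)
          exact ⟨⟨h2, Nat.div_le_self _ _⟩, h1⟩
      rw [this, Finset.sum_singleton]
    · rw [if_neg h]
      apply Finset.sum_eq_zero
      intro j hj
      rw [if_neg]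
      intro hc
      exact h ⟨j, by rw [← hc]; ring⟩

lemma gauss (m : ℕ) (hm : 1 ≤ m) :
    ∑ k ∈ m.divisors, k * pik Fq k = Fintype.card Fq ^ m := by
  have h1 := I1 (Fq := Fq) m
  have h2 := I1 (Fq := Fq) (m - 1)
  have hrec : ∑ k ∈ Icc 1 m, pik Fq k * W Fq m k
      = Fintype.card Fq * ∑ k ∈ Icc 1 (m - 1), pik Fq k * W Fq (m - 1) k
        + ∑ k ∈ m.divisors, k * pik Fq k := by
    have hsplit : ∀ k ∈ Icc 1 m, pik Fq k * W Fq m k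
        = Fintype.card Fq * (pik Fq k * W Fq (m - 1) k)
          + pik Fq k * (if k ∣ m then k else 0) := by
      intro k hk
      rw [Finset.mem_Icc] at hk
      rw [W_rec hm hk.1]
      ring
    rw [Finset.sum_congr rfl hsplit, Finset.sum_add_distrib, ← Finset.mul_sum]
    congr 1
    · congr 1
      rw [← Finset.sum_subset (Finset.Icc_subset_Icc_right (by omega : m - 1 ≤ m))]
      intro k hk hk'
      rw [Finset.mem_Icc] at hk
      rw [Finset.mem_Icc] at hk'
      have : k = m := by omega
      subst this
      rw [W_zero_top hm, mul_zero]
    · rw [← Finset.sum_filter_add_sum_filter_not (Icc 1 m) (fun k => k ∣ m)]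
      have hz : ∑ k ∈ (Icc 1 m).filter (fun k => ¬ k ∣ m), pik Fq k * (if k ∣ m then k else 0) = 0 := by
        apply Finset.sum_eq_zero
        intro k hk
        rw [Finset.mem_filter] at hk
        rw [if_neg hk.2, mul_zero]
      rw [hz, add_zero]
      have hset : (Icc 1 m).filter (fun k => k ∣ m) = m.divisors := by
        ext k
        simp only [Finset.mem_filter, Finset.mem_Icc, Nat.mem_divisors]
        constructor
        · rintro ⟨⟨h1, h2⟩, h3⟩; exact ⟨h3, by omega⟩
        · rintro ⟨h1, h2⟩
          exact ⟨⟨Nat.pos_of_dvd_of_pos h1 (by omega), Nat.le_of_dvd (by omega) h1⟩, h1⟩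
      rw [hset]
      refine Finset.sum_congr rfl (fun k hk => ?_)
      rw [Nat.mem_divisors] at hk
      rw [if_pos hk.1, mul_comm]
  rw [hrec, ← h2] at h1
  obtain ⟨t, rfl⟩ : ∃ t, m = t + 1 := ⟨m - 1, by omega⟩
  simp only [Nat.add_sub_cancel] at h1 h2 hrec ⊢
  have hq : Fintype.card Fq * (t * Fintype.card Fq ^ t) + Fintype.card Fq ^ (t + 1)
      = (t + 1) * Fintype.card Fq ^ (t + 1) := by
    rw [pow_succ]
    ring
  omega

lemma hq2 : 2 ≤ Fintype.card Fq := Fintype.one_lt_card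

lemma pik_le {k : ℕ} (hk : 1 ≤ k) : k * pik Fq k ≤ Fintype.card Fq ^ k := by
  rw [← gauss k hk]
  exact Finset.single_le_sum (f := fun e => e * pik Fq e) (fun a _ => Nat.zero_le _)
    (Nat.mem_divisors_self k (by omega))

lemma geom_sum_le (K : ℕ) : ∑ e ∈ Icc 1 K, Fintype.card Fq ^ e
    ≤ 2 * Fintype.card Fq ^ K := by
  induction K with
  | zero => simp
  | succ K ih =>
    have hins : Icc 1 (K + 1) = insert (K + 1) (Icc 1 K) := by
      ext j
      simp only [Finset.mem_Icc, Finset.mem_insert]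
      omega
    rw [hins, Finset.sum_insert (by simp)]
    have h2 : 2 * Fintype.card Fq ^ K ≤ Fintype.card Fq ^ (K + 1) := by
      calc 2 * Fintype.card Fq ^ K ≤ Fintype.card Fq * Fintype.card Fq ^ K :=
            Nat.mul_le_mul_right _ (hq2 (Fq := Fq))
        _ = Fintype.card Fq ^ (K + 1) := by rw [pow_succ]; ring
    omega

lemma pik_lower {k : ℕ} (hk : 1 ≤ k) :
    Fintype.card Fq ^ k ≤ k * pik Fq k + 2 * Fintype.card Fq ^ (k / 2) := by
  have hg := gauss (Fq := Fq) k hk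
  rw [← Nat.cons_self_properDivisors (by omega : k ≠ 0), Finset.sum_cons] at hg
  have hsub : k.properDivisors ⊆ Icc 1 (k / 2) := by
    intro e he
    rw [Nat.mem_properDivisors] at he
    obtain ⟨⟨c, hc⟩, hlt⟩ := he
    rw [Finset.mem_Icc]
    have he1 : 1 ≤ e := Nat.pos_of_dvd_of_pos ⟨c, hc⟩ (by omega)
    have hc2 : 2 ≤ c := by
      rcases Nat.lt_or_ge c 2 with h | h
      · interval_cases c <;> omega
      · exact h
    refine ⟨he1, ?_⟩
    rw [Nat.le_div_iff_mul_le (by omega)]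
    nlinarith
  have hbound : ∑ e ∈ k.properDivisors, e * pik Fq e
      ≤ 2 * Fintype.card Fq ^ (k / 2) := by
    calc ∑ e ∈ k.properDivisors, e * pik Fq e
        ≤ ∑ e ∈ k.properDivisors, Fintype.card Fq ^ e := by
          apply Finset.sum_le_sum
          intro e he
          rw [Nat.mem_properDivisors] at he
          exact pik_le (Nat.pos_of_dvd_of_pos he.1 (by omega))
      _ ≤ ∑ e ∈ Icc 1 (k / 2), Fintype.card Fq ^ e :=
          Finset.sum_le_sum_of_subset hsub
      _ ≤ 2 * Fintype.card Fq ^ (k / 2) := geom_sum_le _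
  omega


lemma card_rough_dvd_le {m d j : ℕ} {P : Polynomial Fq} (hP : P.Monic)
    (hjk : j * P.natDegree ≤ m) :
    ((roughs Fq m d).filter (fun F => P ^ j ∣ F)).card ≤ Nr Fq (m - j * P.natDegree) d := by
  rw [Nr]
  apply Finset.card_le_card_of_injOn (fun F => F /ₘ (P ^ j))
  · intro F hF
    rw [Finset.mem_coe, Finset.mem_filter, mem_roughs] at hF
    obtain ⟨⟨hFm, hFd, hFr⟩, hdvd⟩ := hF
    have hPj : (P ^ j).Monic := hP.pow j
    have heq : F = P ^ j * (F /ₘ P ^ j) := by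
      conv_lhs => rw [← Polynomial.modByMonic_add_div F (P ^ j)]
      rw [(Polynomial.modByMonic_eq_zero_iff_dvd hPj).2 hdvd, zero_add]
    obtain ⟨h1, h2⟩ := quot_monic hFm hPj heq
    rw [Finset.mem_coe, mem_roughs]
    refine ⟨h1, ?_, ?_⟩
    · rw [h2, hFd, natDegree_pow]
    · intro Q hQm hQi hQd
      exact hFr Q hQm hQi (hQd.trans ⟨P ^ j, by rw [mul_comm]; exact heq⟩)
  · intro F1 hF1 F2 hF2 heq
    rw [Finset.mem_coe, Finset.mem_filter] at hF1 hF2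
    have hPj : (P ^ j).Monic := hP.pow j
    have e1 : F1 = P ^ j * (F1 /ₘ P ^ j) := by
      conv_lhs => rw [← Polynomial.modByMonic_add_div F1 (P ^ j)]
      rw [(Polynomial.modByMonic_eq_zero_iff_dvd hPj).2 hF1.2, zero_add]
    have e2 : F2 = P ^ j * (F2 /ₘ P ^ j) := by
      conv_lhs => rw [← Polynomial.modByMonic_add_div F2 (P ^ j)]
      rw [(Polynomial.modByMonic_eq_zero_iff_dvd hPj).2 hF2.2, zero_add]
    rw [e1, e2]
    exact congrArg (fun H => P ^ j * H) heq

lemma card_rough_dvd_ge {m d : ℕ} {P : Polynomial Fq} (hP : P.Monic) (hPi : Irreducible P)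
    (hd : d ≤ P.natDegree) (hk : P.natDegree ≤ m) :
    Nr Fq (m - P.natDegree) d ≤ ((roughs Fq m d).filter (fun F => P ∣ F)).card := by
  rw [Nr]
  apply Finset.card_le_card_of_injOn (fun G => P * G)
  · intro G hG
    rw [Finset.mem_coe, mem_roughs] at hG
    obtain ⟨hGm, hGd, hGr⟩ := hG
    rw [Finset.mem_coe, Finset.mem_filter, mem_roughs]
    refine ⟨⟨hP.mul hGm, ?_, ?_⟩, Dvd.intro _ rfl⟩
    · rw [hP.natDegree_mul hGm, hGd]; omega
    · intro Q hQm hQi hQd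
      have hQp : Prime Q := (UniqueFactorizationMonoid.irreducible_iff_prime).1 hQi
      rcases hQp.2.2 _ _ hQd with h | h
      · have : Q = P := Polynomial.eq_of_monic_of_associated hQm hP
          (hQi.associated_of_dvd hPi h)
        rw [this]; exact hd
      · exact hGr Q hQm hQi h
  · intro G1 _ G2 _ heq
    exact mul_left_cancel₀ hP.ne_zero heq

lemma rough_upper_raw (m d : ℕ) (hm : 1 ≤ m) (hd : 1 ≤ d) :
    m * Nr Fq m d ≤ ∑ k ∈ Icc 1 m, pik Fq k *
      ∑ j ∈ Icc 1 m, (if d ≤ k ∧ j * k ≤ m then k * Nr Fq (m - j * k) d else 0) := by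
  have hkey := key_identity m (roughs Fq m d) (Finset.filter_subset _ _)
  rw [← Nr] at hkey
  rw [hkey, sum_bigIrreds_eq]
  apply Finset.sum_le_sum
  intro k hk
  have hstep : ∀ P ∈ irreds Fq k, (∑ j ∈ Icc 1 m,
      P.natDegree * ((roughs Fq m d).filter (fun F => P ^ j ∣ F)).card)
      ≤ ∑ j ∈ Icc 1 m,
        (if d ≤ P.natDegree ∧ j * P.natDegree ≤ m
          then P.natDegree * Nr Fq (m - j * P.natDegree) d else 0) := by
    intro P hP
    rw [mem_irreds] at hP
    obtain ⟨hPm, hPd, hPi⟩ := hP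
    apply Finset.sum_le_sum
    intro j hj
    rw [Finset.mem_Icc] at hj
    by_cases hle : d ≤ P.natDegree ∧ j * P.natDegree ≤ m
    · rw [if_pos hle]
      exact Nat.mul_le_mul_left _ (card_rough_dvd_le hPm hle.2)
    · rw [if_neg hle]
      rcases Decidable.not_and_iff_or_not.1 hle with h | h
      · -- degree < d : no rough multiples
        have : (roughs Fq m d).filter (fun F => P ^ j ∣ F) = ∅ := by
          ext F
          simp only [Finset.mem_filter, Finset.notMem_empty, iff_false, not_and]
          intro hF hdvd
          rw [mem_roughs] at hF
          exact h (hF.2.2 P hPm hPi ((dvd_pow_self P (by omega : j ≠ 0)).trans hdvd))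
        rw [this]
        simp
      · -- degree too large
        have : (roughs Fq m d).filter (fun F => P ^ j ∣ F) = ∅ := by
          ext F
          simp only [Finset.mem_filter, Finset.notMem_empty, iff_false, not_and]
          intro hF hdvd
          rw [mem_roughs] at hF
          have := natDegree_le_of_dvd hdvd hF.1.ne_zero
          rw [natDegree_pow, hF.2.1] at this
          omega
        rw [this]
        simp
  calc ∑ P ∈ irreds Fq k, ∑ j ∈ Icc 1 m,
        P.natDegree * ((roughs Fq m d).filter (fun F => P ^ j ∣ F)).card
      ≤ ∑ P ∈ irreds Fq k, ∑ j ∈ Icc 1 m,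
        (if d ≤ P.natDegree ∧ j * P.natDegree ≤ m
          then P.natDegree * Nr Fq (m - j * P.natDegree) d else 0) :=
        Finset.sum_le_sum hstep
    _ = pik Fq k * ∑ j ∈ Icc 1 m, (if d ≤ k ∧ j * k ≤ m
          then k * Nr Fq (m - j * k) d else 0) := by
        have := sum_irreds_const (Fq := Fq) k (fun t => ∑ j ∈ Icc 1 m,
          (if d ≤ t ∧ j * t ≤ m then t * Nr Fq (m - j * t) d else 0))
        rw [this, smul_eq_mul]

lemma rough_lower_raw (m d : ℕ) (hd : 1 ≤ d) (hdm : d ≤ m) :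
    ∑ k ∈ insert m (Icc d (m - d)), pik Fq k * (k * Nr Fq (m - k) d)
      ≤ m * Nr Fq m d := by
  have hkey := key_identity m (roughs Fq m d) (Finset.filter_subset _ _)
  rw [← Nr] at hkey
  rw [hkey, sum_bigIrreds_eq]
  have hsub : insert m (Icc d (m - d)) ⊆ Icc 1 m := by
    intro k hk
    rcases Finset.mem_insert.1 hk with rfl | hk
    · rw [Finset.mem_Icc]; omega
    · rw [Finset.mem_Icc] at hk ⊢; omega
  calc ∑ k ∈ insert m (Icc d (m - d)), pik Fq k * (k * Nr Fq (m - k) d)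
      ≤ ∑ k ∈ insert m (Icc d (m - d)), ∑ P ∈ irreds Fq k, ∑ j ∈ Icc 1 m,
          P.natDegree * ((roughs Fq m d).filter (fun F => P ^ j ∣ F)).card := by
        apply Finset.sum_le_sum
        intro k hk
        have hkd : d ≤ k ∧ k ≤ m := by
          rcases Finset.mem_insert.1 hk with rfl | hk'
          · exact ⟨hdm, le_rfl⟩
          · rw [Finset.mem_Icc] at hk'; omega
        have h1 : pik Fq k * (k * Nr Fq (m - k) d)
            = ∑ P ∈ irreds Fq k, P.natDegree * Nr Fq (m - P.natDegree) d := by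
          rw [sum_irreds_const (Fq := Fq) k (fun t => t * Nr Fq (m - t) d), smul_eq_mul]
        rw [h1]
        apply Finset.sum_le_sum
        intro P hP
        rw [mem_irreds] at hP
        obtain ⟨hPm, hPd, hPi⟩ := hP
        have hstep1 : P.natDegree * Nr Fq (m - P.natDegree) d
            ≤ P.natDegree * ((roughs Fq m d).filter (fun F => P ^ 1 ∣ F)).card := by
          apply Nat.mul_le_mul_left
          have := card_rough_dvd_ge hPm hPi (hPd ▸ hkd.1) (hPd ▸ hkd.2)
          simpa [pow_one] using this
        refine hstep1.trans ?_
        exact Finset.single_le_sum (f := fun j =>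
            P.natDegree * ((roughs Fq m d).filter (fun F => P ^ j ∣ F)).card)
          (fun _ _ => Nat.zero_le _) (Finset.mem_Icc.2 ⟨le_rfl, by omega⟩)
    _ ≤ ∑ k ∈ Icc 1 m, ∑ P ∈ irreds Fq k, ∑ j ∈ Icc 1 m,
          P.natDegree * ((roughs Fq m d).filter (fun F => P ^ j ∣ F)).card :=
        Finset.sum_le_sum_of_subset hsub

lemma pik_one : pik Fq 1 = Fintype.card Fq := by
  have h := gauss (Fq := Fq) 1 le_rfl
  rw [Nat.divisors_one, Finset.sum_singleton, one_mul, pow_one] at h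
  exact h

lemma pik_lower_half {k : ℕ} (hk : 1 ≤ k) :
    Fintype.card Fq ^ k ≤ 2 * (k * pik Fq k) := by
  have hq : 2 ≤ Fintype.card Fq := hq2
  rcases Nat.lt_or_ge k 3 with hk3 | hk3
  · interval_cases k
    · -- k = 1
      rw [pik_one, pow_one, one_mul]
      omega
    · -- k = 2
      have h := gauss (Fq := Fq) 2 (by omega)
      have hdiv : (2 : ℕ).divisors = {1, 2} := Nat.Prime.divisors Nat.prime_two
      rw [hdiv, Finset.sum_insert (by decide), Finset.sum_singleton, one_mul, pik_one] at h
      have hsq : Fintype.card Fq ^ 2 = Fintype.card Fq * Fintype.card Fq := by rw [pow_two]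
      have h2q : 2 * Fintype.card Fq ≤ Fintype.card Fq * Fintype.card Fq :=
        Nat.mul_le_mul_right _ hq
      omega
  · -- k ≥ 3
    have h1 := pik_lower (Fq := Fq) (by omega : 1 ≤ k)
    have h4 : 4 * Fintype.card Fq ^ (k / 2) ≤ Fintype.card Fq ^ k := by
      have he : Fintype.card Fq ^ k
          = Fintype.card Fq ^ (k / 2) * Fintype.card Fq ^ (k - k / 2) := by
        rw [← pow_add]
        congr 1
        omega
      have h2 : (4 : ℕ) ≤ Fintype.card Fq ^ (k - k / 2) := by
        calc (4:ℕ) = 2 ^ 2 := by norm_num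
          _ ≤ 2 ^ (k - k / 2) := Nat.pow_le_pow_right (by omega) (by omega)
          _ ≤ Fintype.card Fq ^ (k - k / 2) := Nat.pow_le_pow_left hq _
      calc 4 * Fintype.card Fq ^ (k / 2)
          ≤ Fintype.card Fq ^ (k - k / 2) * Fintype.card Fq ^ (k / 2) :=
            Nat.mul_le_mul_right _ h2
        _ = Fintype.card Fq ^ k := by rw [← pow_add]; congr 1; omega
    omega

lemma Nr_one_eq (m : ℕ) : Nr Fq m 1 = Fintype.card Fq ^ m := by
  rw [Nr, roughs_one, card_monics]

lemma Nr_le_pik {m d : ℕ} (h1 : 1 ≤ m) (h2 : m < 2 * d) : Nr Fq m d ≤ pik Fq m := by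
  rw [Nr, pik]
  exact Finset.card_le_card (roughs_subset_irreds h1 h2)



lemma aux_pow : ∀ m : ℕ, m - 1 ≤ 2 ^ ((m + 1) / 2)
  | 0 => by simp
  | 1 => by simp
  | (m+2) => by
    rcases Nat.lt_or_ge m 3 with hm | hm
    · interval_cases m <;> norm_num
    · have h := aux_pow m
      have h2 : (m + 2 + 1) / 2 = (m + 1) / 2 + 1 := by omega
      rw [h2, pow_succ]
      omega

lemma ceil_pow : ∀ k : ℕ, ((2:ℝ)⁻¹) ^ ((k + 1) / 2) ≤ (71 / 100 : ℝ) ^ k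
  | 0 => by norm_num
  | 1 => by norm_num
  | (k+2) => by
    have h := ceil_pow k
    have h2 : (k + 2 + 1) / 2 = (k + 1) / 2 + 1 := by omega
    rw [h2, pow_succ]
    have h3 : ((71:ℝ)/100) ^ (k + 2) = (71/100 : ℝ)^k * ((71/100) * (71/100)) := by ring
    rw [h3]
    have hp1 : (0:ℝ) ≤ ((2:ℝ)⁻¹) ^ ((k + 1) / 2) := by positivity
    nlinarith [h]

lemma geom_half_range (n : ℕ) : ∑ i ∈ Finset.range n, ((2:ℝ)⁻¹) ^ i ≤ 2 := by
  rw [geom_sum_eq (by norm_num)]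
  rw [div_le_iff_of_neg (by norm_num : ((2:ℝ)⁻¹ - 1) < 0)]
  have : (0:ℝ) ≤ ((2:ℝ)⁻¹) ^ n := by positivity
  linarith

lemma geom_71_range (n : ℕ) : ∑ i ∈ Finset.range n, ((71:ℝ)/100) ^ i ≤ 100 / 29 := by
  rw [geom_sum_eq (by norm_num)]
  rw [div_le_iff_of_neg (by norm_num : ((71:ℝ)/100 - 1) < 0)]
  have : (0:ℝ) ≤ ((71:ℝ)/100) ^ n := by positivity
  linarith

lemma sum_Icc_pow_shift (x : ℝ) (a n : ℕ) (ha : 1 ≤ a) :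
    ∑ k ∈ Icc a n, x ^ (k - 1) = ∑ i ∈ Finset.range (n + 1 - a), x ^ (a - 1 + i) := by
  rw [← Finset.Ico_add_one_right_eq_Icc, Finset.sum_Ico_eq_sum_range]
  refine Finset.sum_congr rfl (fun i _ => ?_)
  congr 1
  omega

lemma half_shift_one (m : ℕ) : ∑ k ∈ Icc 1 m, ((2:ℝ)⁻¹) ^ (k - 1) ≤ 2 := by
  rw [sum_Icc_pow_shift _ 1 m le_rfl]
  simp only [Nat.sub_self, Nat.zero_add]
  exact geom_half_range _

lemma half_shift_two (m : ℕ) : ∑ j ∈ Icc 2 m, ((2:ℝ)⁻¹) ^ (j - 1) ≤ 1 := by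
  rw [sum_Icc_pow_shift _ 2 m (by omega)]
  have : ∀ i ∈ Finset.range (m + 1 - 2), ((2:ℝ)⁻¹) ^ (2 - 1 + i) = (2:ℝ)⁻¹ * ((2:ℝ)⁻¹)^i := by
    intro i _
    rw [pow_add, pow_one]
  rw [Finset.sum_congr rfl this, ← Finset.mul_sum]
  have := geom_half_range (m + 1 - 2)
  nlinarith

lemma sum_71_Icc (m : ℕ) : ∑ k ∈ Icc 1 m, ((71:ℝ)/100) ^ k ≤ 5 / 2 := by
  have h : ∀ k ∈ Icc 1 m, ((71:ℝ)/100) ^ k = (71/100 : ℝ) * ((71:ℝ)/100) ^ (k-1) := by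
    intro k hk
    rw [Finset.mem_Icc] at hk
    rw [← pow_succ']
    congr 1
    omega
  rw [Finset.sum_congr rfl h, ← Finset.mul_sum]
  rw [sum_Icc_pow_shift _ 1 m le_rfl]
  simp only [Nat.sub_self, Nat.zero_add]
  have := geom_71_range (m + 1 - 1)
  nlinarith


set_option maxHeartbeats 1000000
attribute [local irreducible] Nr pik roughs monics irreds

noncomputable def B1 (d m : ℕ) (Q : ℝ) (k j : ℕ) : ℝ := if j * k = m then (d:ℝ) * Q^k else 0
noncomputable def B2 (d m : ℕ) (Q : ℝ) (k j : ℕ) : ℝ :=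
  if d ≤ k ∧ j * k ≤ m - d then 6 * Q^(m - (j-1)*k) else 0

lemma B1_nonneg {d m : ℕ} {Q : ℝ} (hQ : 0 ≤ Q) (k j : ℕ) : 0 ≤ B1 d m Q k j := by
  rw [B1]; split_ifs <;> positivity

lemma B2_nonneg {d m : ℕ} {Q : ℝ} (hQ : 0 ≤ Q) (k j : ℕ) : 0 ≤ B2 d m Q k j := by
  rw [B2]; split_ifs <;> positivity

lemma upper_bound (d : ℕ) (hd : 1 ≤ d) :
    ∀ m : ℕ, 1 ≤ m → (d : ℝ) * (Nr Fq m d : ℝ) ≤ 6 * (Fintype.card Fq : ℝ) ^ m := by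
  intro m
  induction m using Nat.strong_induction_on with
  | _ m IH =>
  intro hm
  have hq : 2 ≤ Fintype.card Fq := hq2
  set Q : ℝ := (Fintype.card Fq : ℝ) with hQdef
  have hQ2 : (2:ℝ) ≤ Q := by rw [hQdef]; exact_mod_cast hq
  have hQ1 : (1:ℝ) ≤ Q := by linarith
  have hQ0 : (0:ℝ) < Q := by linarith
  rcases eq_or_lt_of_le hd with h1 | hd2
  · -- d = 1
    rw [← h1, Nr_one_eq]
    push_cast
    nlinarith [pow_pos hQ0 m]
  -- 2 ≤ d
  rcases Nat.lt_or_ge m d with hmd | hmd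
  · rw [Nr_small hm hmd]
    push_cast
    rw [mul_zero]
    positivity
  rcases Nat.lt_or_ge m (2*d) with hm2d | hm2d
  · -- d ≤ m < 2d
    have h1 : Nr Fq m d ≤ pik Fq m := Nr_le_pik hm hm2d
    have h2 : m * pik Fq m ≤ Fintype.card Fq ^ m := pik_le hm
    have h3 : d * Nr Fq m d ≤ Fintype.card Fq ^ m :=
      le_trans (Nat.mul_le_mul hmd h1) h2
    have h4 : ((d * Nr Fq m d : ℕ) : ℝ) ≤ ((Fintype.card Fq ^ m : ℕ) : ℝ) := by
      exact_mod_cast h3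
    push_cast at h4
    nlinarith [pow_pos hQ0 m]
  · -- main case : 2d ≤ m
    have raw := rough_upper_raw (Fq := Fq) m d hm hd
    have rawR : (m:ℝ) * (Nr Fq m d : ℝ) ≤ ∑ k ∈ Icc 1 m, (pik Fq k : ℝ) *
        ∑ j ∈ Icc 1 m, (if d ≤ k ∧ j * k ≤ m then (k:ℝ) * (Nr Fq (m - j * k) d : ℝ) else 0) := by
      exact_mod_cast raw
    have hterm : ∀ k ∈ Icc 1 m, ∀ j ∈ Icc 1 m,
        (d:ℝ) * ((pik Fq k : ℝ) *
          (if d ≤ k ∧ j * k ≤ m then (k:ℝ) * (Nr Fq (m - j * k) d : ℝ) else 0))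
        ≤ B1 d m Q k j + B2 d m Q k j := by
      intro k hk j hj
      rw [Finset.mem_Icc] at hk hj
      have hB1nn := B1_nonneg (d := d) (m := m) hQ0.le k j
      have hB2nn := B2_nonneg (d := d) (m := m) hQ0.le k j
      by_cases hc : d ≤ k ∧ j * k ≤ m
      · obtain ⟨hdk, hjk⟩ := hc
        rw [if_pos (⟨hdk, hjk⟩ : d ≤ k ∧ j * k ≤ m)]
        have hkpk : (k : ℝ) * (pik Fq k : ℝ) ≤ Q ^ k := by
          rw [hQdef]
          exact_mod_cast pik_le (Fq := Fq) (k := k) (by omega)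
        rcases eq_or_lt_of_le hjk with hjkm | hjkm
        · -- j * k = m
          rw [hjkm, Nat.sub_self, Nr_zero]
          have hb1 : B1 d m Q k j = (d:ℝ) * Q ^ k := by rw [B1]; exact if_pos hjkm
          have hle : (d:ℝ) * ((pik Fq k:ℝ) * ((k:ℝ) * ((1:ℕ):ℝ))) ≤ (d:ℝ) * Q^k := by
            push_cast
            have hd0 : (0:ℝ) ≤ (d:ℝ) := Nat.cast_nonneg d
            nlinarith [hkpk]
          calc (d:ℝ) * ((pik Fq k:ℝ) * ((k:ℝ) * ((1:ℕ):ℝ))) ≤ (d:ℝ) * Q^k := hle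
            _ = B1 d m Q k j := hb1.symm
            _ ≤ B1 d m Q k j + B2 d m Q k j := le_add_of_nonneg_right hB2nn
        · -- j*k < m
          rcases Nat.lt_or_ge (m - j*k) d with hsmall | hbig
          · rw [Nr_small (by omega) hsmall]
            push_cast
            rw [mul_zero, mul_zero, mul_zero]
            exact add_nonneg hB1nn hB2nn
          · have hjk2 : j * k ≤ m - d := by omega
            have hIH : (d:ℝ) * (Nr Fq (m - j*k) d : ℝ) ≤ 6 * Q ^ (m - j*k) := by
              have hlt : m - j*k < m := by
                have h1k : 1 ≤ j * k := by
                  have := Nat.mul_le_mul hj.1 hk.1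
                  omega
                omega
              exact IH (m - j*k) hlt (by omega)
            have hkle : k ≤ j * k := Nat.le_mul_of_pos_left k (by omega)
            have hexp : k + (m - j * k) = m - (j-1) * k := by
              have e : (j-1) * k = j * k - k := by rw [Nat.sub_mul, one_mul]
              omega
            have hb2 : B2 d m Q k j = 6 * Q ^ (m - (j-1)*k) := by
              rw [B2]; exact if_pos ⟨hdk, hjk2⟩
            have step : (d:ℝ) * ((pik Fq k:ℝ) * ((k:ℝ) * (Nr Fq (m - j*k) d : ℝ)))
                = ((k:ℝ) * (pik Fq k:ℝ)) * ((d:ℝ) * (Nr Fq (m - j*k) d :ℝ)) := by ring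
            rw [step]
            calc ((k:ℝ) * (pik Fq k:ℝ)) * ((d:ℝ) * (Nr Fq (m - j*k) d :ℝ))
                ≤ Q^k * (6 * Q^(m - j*k)) := by
                  apply mul_le_mul hkpk hIH (by positivity) (by positivity)
              _ = 6 * Q ^ (m - (j-1)*k) := by rw [← hexp, pow_add]; ring
              _ = B2 d m Q k j := hb2.symm
              _ ≤ B1 d m Q k j + B2 d m Q k j := le_add_of_nonneg_left hB1nn
      · rw [if_neg hc, mul_zero, mul_zero]
        exact add_nonneg hB1nn hB2nn
    have main1 : (d:ℝ) * ((m:ℝ) * (Nr Fq m d : ℝ))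
        ≤ ∑ k ∈ Icc 1 m, ∑ j ∈ Icc 1 m, (B1 d m Q k j + B2 d m Q k j) := by
      calc (d:ℝ) * ((m:ℝ) * (Nr Fq m d : ℝ))
          ≤ (d:ℝ) * (∑ k ∈ Icc 1 m, (pik Fq k : ℝ) *
            ∑ j ∈ Icc 1 m, (if d ≤ k ∧ j * k ≤ m then (k:ℝ) * (Nr Fq (m - j * k) d : ℝ) else 0)) :=
            mul_le_mul_of_nonneg_left rawR (Nat.cast_nonneg d)
        _ = ∑ k ∈ Icc 1 m, ∑ j ∈ Icc 1 m, (d:ℝ) * ((pik Fq k : ℝ) *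
            (if d ≤ k ∧ j * k ≤ m then (k:ℝ) * (Nr Fq (m - j * k) d : ℝ) else 0)) := by
            rw [Finset.mul_sum]
            refine Finset.sum_congr rfl fun k _ => ?_
            rw [← mul_assoc, Finset.mul_sum]
            refine Finset.sum_congr rfl fun j _ => by ring
        _ ≤ ∑ k ∈ Icc 1 m, ∑ j ∈ Icc 1 m, (B1 d m Q k j + B2 d m Q k j) :=
            Finset.sum_le_sum fun k hk => Finset.sum_le_sum (hterm k hk)
    have hsumB1 : ∑ k ∈ Icc 1 m, ∑ j ∈ Icc 1 m, B1 d m Q k j ≤ 2 * (d:ℝ) * Q ^ m := by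
      rw [Finset.sum_comm]
      have hj1 : ∀ j ∈ Icc 1 m, ∑ k ∈ Icc 1 m, B1 d m Q k j ≤ (d:ℝ) * Q ^ (m / j) := by
        intro j hj
        rw [Finset.mem_Icc] at hj
        have hrw : ∑ k ∈ Icc 1 m, B1 d m Q k j
            = ∑ k ∈ (Icc 1 m).filter (fun k => j * k = m), (d:ℝ) * Q ^ k := by
          rw [Finset.sum_filter]
          rfl
        rw [hrw]
        have hval : ∀ k ∈ (Icc 1 m).filter (fun k => j * k = m),
            (d:ℝ) * Q ^ k = (d:ℝ) * Q ^ (m / j) := by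
          intro k hk
          rw [Finset.mem_filter] at hk
          have : m / j = k := Nat.div_eq_of_eq_mul_left (by omega) (by rw [← hk.2]; ring)
          rw [this]
        rw [Finset.sum_congr rfl hval]
        have hss : (Icc 1 m).filter (fun k => j * k = m) ⊆ {m / j} := by
          intro k hk
          rw [Finset.mem_filter] at hk
          rw [Finset.mem_singleton]
          exact (Nat.div_eq_of_eq_mul_left (by omega) (by rw [← hk.2]; ring)).symm
        calc ∑ k ∈ (Icc 1 m).filter (fun k => j * k = m), (d:ℝ) * Q ^ (m / j)
            ≤ ∑ k ∈ ({m / j} : Finset ℕ), (d:ℝ) * Q ^ (m / j) :=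
              Finset.sum_le_sum_of_subset_of_nonneg hss (fun _ _ _ => by positivity)
          _ = (d:ℝ) * Q ^ (m / j) := Finset.sum_singleton _ _
      have hicc : Icc 1 m = insert 1 (Icc 2 m) := by
        ext x
        simp only [Finset.mem_Icc, Finset.mem_insert]
        omega
      have hins : ∀ f : ℕ → ℝ, ∑ j ∈ Icc 1 m, f j = f 1 + ∑ j ∈ Icc 2 m, f j := by
        intro f
        rw [hicc, Finset.sum_insert (by simp)]
      have t1 : ∑ k ∈ Icc 1 m, B1 d m Q k 1 ≤ (d:ℝ) * Q ^ m := by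
        have := hj1 1 (Finset.mem_Icc.2 ⟨le_rfl, hm⟩)
        simpa [Nat.div_one] using this
      have t2 : ∑ j ∈ Icc 2 m, ∑ k ∈ Icc 1 m, B1 d m Q k j ≤ (d:ℝ) * Q ^ m := by
        have step1 : ∀ j ∈ Icc 2 m, ∑ k ∈ Icc 1 m, B1 d m Q k j ≤ (d:ℝ) * Q ^ (m / 2) := by
          intro j hj
          rw [Finset.mem_Icc] at hj
          have h1 := hj1 j (Finset.mem_Icc.2 ⟨by omega, hj.2⟩)
          refine h1.trans ?_
          have : Q ^ (m / j) ≤ Q ^ (m / 2) :=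
            pow_le_pow_right₀ hQ1 (Nat.div_le_div_left hj.1 (by omega))
          nlinarith [Nat.cast_nonneg (α := ℝ) d]
        calc ∑ j ∈ Icc 2 m, ∑ k ∈ Icc 1 m, B1 d m Q k j
            ≤ ∑ _j ∈ Icc 2 m, (d:ℝ) * Q ^ (m / 2) := Finset.sum_le_sum step1
          _ = ((m - 1 : ℕ) : ℝ) * ((d:ℝ) * Q ^ (m / 2)) := by
              rw [Finset.sum_const, Nat.card_Icc, nsmul_eq_mul]
              have hm12 : m + 1 - 2 = m - 1 := by omega
              rw [hm12]
          _ ≤ (d:ℝ) * Q ^ m := by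
              have ha : ((m - 1 : ℕ) : ℝ) ≤ (2:ℝ) ^ ((m+1)/2) := by
                calc ((m - 1 : ℕ) : ℝ) ≤ ((2 ^ ((m+1)/2) : ℕ) : ℝ) := by
                      exact_mod_cast aux_pow m
                  _ = (2:ℝ) ^ ((m+1)/2) := by push_cast; ring
              have hb : (2:ℝ) ^ ((m+1)/2) ≤ Q ^ ((m+1)/2) :=
                pow_le_pow_left₀ (by norm_num) hQ2 _
              have hc : Q ^ ((m+1)/2) * Q ^ (m / 2) = Q ^ m := by
                rw [← pow_add]
                congr 1
                omega
              have hd0 : (0:ℝ) ≤ (d:ℝ) := Nat.cast_nonneg d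
              have h1 : ((m - 1 : ℕ) : ℝ) * Q ^ (m / 2) ≤ Q ^ m := by
                calc ((m - 1 : ℕ) : ℝ) * Q ^ (m / 2) ≤ Q ^ ((m+1)/2) * Q ^ (m / 2) := by
                      apply mul_le_mul_of_nonneg_right (ha.trans hb) (by positivity)
                  _ = Q ^ m := hc
              nlinarith [pow_nonneg hQ0.le (m / 2), pow_nonneg hQ0.le m]
      calc ∑ j ∈ Icc 1 m, ∑ k ∈ Icc 1 m, B1 d m Q k j
          = ∑ k ∈ Icc 1 m, B1 d m Q k 1 + ∑ j ∈ Icc 2 m, ∑ k ∈ Icc 1 m, B1 d m Q k j :=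
            hins _
        _ ≤ 2 * (d:ℝ) * Q ^ m := by linarith [t1, t2]
    have hsumB2 : ∑ k ∈ Icc 1 m, ∑ j ∈ Icc 1 m, B2 d m Q k j
        ≤ 6 * Q^m * ((m:ℝ) - 2*(d:ℝ) + 1) + 12 * Q^m := by
      have hicc : Icc 1 m = insert 1 (Icc 2 m) := by
        ext x
        simp only [Finset.mem_Icc, Finset.mem_insert]
        omega
      have hsplit : ∑ k ∈ Icc 1 m, ∑ j ∈ Icc 1 m, B2 d m Q k j
          = ∑ k ∈ Icc 1 m, B2 d m Q k 1 + ∑ k ∈ Icc 1 m, ∑ j ∈ Icc 2 m, B2 d m Q k j := by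
        rw [Finset.sum_congr rfl (fun k _ => by rw [hicc, Finset.sum_insert (by simp)]),
          Finset.sum_add_distrib]
      rw [hsplit]
      have hA : ∑ k ∈ Icc 1 m, B2 d m Q k 1 ≤ 6 * Q^m * ((m:ℝ) - 2*(d:ℝ) + 1) := by
        have hb : ∀ k ∈ Icc 1 m, B2 d m Q k 1
            = if d ≤ k ∧ 1 * k ≤ m - d then 6 * Q^m else 0 := by
          intro k _
          rw [B2]
          have h0 : (1 - 1) * k = 0 := by norm_num
          rw [h0, Nat.sub_zero]
        rw [Finset.sum_congr rfl hb, ← Finset.sum_filter]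
        have hfil : (Icc 1 m).filter (fun k => d ≤ k ∧ 1 * k ≤ m - d) = Icc d (m - d) := by
          ext k
          simp only [Finset.mem_filter, Finset.mem_Icc, one_mul]
          omega
        rw [hfil, Finset.sum_const, Nat.card_Icc, nsmul_eq_mul]
        have hc : ((m - d + 1 - d : ℕ) : ℝ) ≤ (m:ℝ) - 2*(d:ℝ) + 1 := by
          have he : (m - d + 1 - d : ℕ) = m - 2*d + 1 := by omega
          rw [he]
          have he2 : ((m - 2*d + 1 : ℕ) : ℝ) = (m:ℝ) - 2*(d:ℝ) + 1 := by
            rw [Nat.cast_add, Nat.cast_sub hm2d]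
            push_cast
            ring
          rw [he2]
        nlinarith [pow_nonneg hQ0.le m]
      have hBb : ∑ k ∈ Icc 1 m, ∑ j ∈ Icc 2 m, B2 d m Q k j ≤ 12 * Q^m := by
        have hter : ∀ k ∈ Icc 1 m, ∀ j ∈ Icc 2 m,
            B2 d m Q k j ≤ 6 * Q^m * (((2:ℝ)⁻¹)^(j-1) * ((2:ℝ)⁻¹)^(k-1)) := by
          intro k hk j hj
          rw [Finset.mem_Icc] at hk hj
          rw [B2]
          split_ifs with hcond
          · obtain ⟨hdk, hjk⟩ := hcond
            have hjkm : j * k ≤ m := by omega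
            have hAm : (j-1)*k ≤ m :=
              le_trans (Nat.mul_le_mul_right k (by omega : j - 1 ≤ j)) hjkm
            have hBA : (j-1) + (k-1) ≤ (j-1)*k := by
              obtain ⟨j', rfl⟩ : ∃ j', j = j' + 2 := ⟨j - 2, by omega⟩
              obtain ⟨k', rfl⟩ : ∃ k', k = k' + 1 := ⟨k - 1, by omega⟩
              have e1 : j' + 2 - 1 = j' + 1 := by omega
              have e2 : k' + 1 - 1 = k' := by omega
              rw [e1, e2]
              have e3 : (j' + 1) * (k' + 1) = j'*k' + j' + k' + 1 := by ring
              rw [e3]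
              omega
            set B := (j-1) + (k-1) with hBdef
            have key : Q ^ (m - (j-1)*k) ≤ Q^m * (((2:ℝ)⁻¹)^(j-1) * ((2:ℝ)⁻¹)^(k-1)) := by
              have h1 : Q ^ (m - (j-1)*k) ≤ Q ^ (m - B) :=
                pow_le_pow_right₀ hQ1 (by omega)
              have h2 : Q ^ (m - B) * Q ^ B = Q ^ m := by
                rw [← pow_add]
                congr 1
                omega
              have h3 : ((2:ℝ)⁻¹)^(j-1) * ((2:ℝ)⁻¹)^(k-1) = ((2:ℝ)^B)⁻¹ := by
                rw [← pow_add, ← hBdef, inv_pow]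
              rw [h3]
              have hQB : (2:ℝ)^B ≤ Q^B := pow_le_pow_left₀ (by norm_num) hQ2 B
              have hmul : Q^(m-B) * (2:ℝ)^B ≤ Q^m := by
                calc Q^(m-B) * (2:ℝ)^B ≤ Q^(m-B) * Q^B := by
                      apply mul_le_mul_of_nonneg_left hQB (by positivity)
                  _ = Q^m := h2
              calc Q ^ (m - (j-1)*k) ≤ Q ^ (m - B) := h1
                _ = Q^(m-B) * (2:ℝ)^B * ((2:ℝ)^B)⁻¹ := by
                    field_simp
                _ ≤ Q^m * ((2:ℝ)^B)⁻¹ := by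
                    apply mul_le_mul_of_nonneg_right hmul (by positivity)
            nlinarith [key]
          · positivity
        have hstep : ∑ k ∈ Icc 1 m, ∑ j ∈ Icc 2 m, B2 d m Q k j
            ≤ ∑ k ∈ Icc 1 m, ∑ j ∈ Icc 2 m,
              6 * Q^m * (((2:ℝ)⁻¹)^(j-1) * ((2:ℝ)⁻¹)^(k-1)) :=
          Finset.sum_le_sum fun k hk => Finset.sum_le_sum (hter k hk)
        refine hstep.trans ?_
        have hinner : ∀ k : ℕ, ∑ j ∈ Icc 2 m, 6 * Q^m * (((2:ℝ)⁻¹)^(j-1) * ((2:ℝ)⁻¹)^(k-1))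
            = (∑ j ∈ Icc 2 m, ((2:ℝ)⁻¹)^(j-1)) * (6 * Q^m * ((2:ℝ)⁻¹)^(k-1)) := by
          intro k
          rw [Finset.sum_mul]
          exact Finset.sum_congr rfl fun j _ => by ring
        have hre : ∑ k ∈ Icc 1 m, ∑ j ∈ Icc 2 m,
            6 * Q^m * (((2:ℝ)⁻¹)^(j-1) * ((2:ℝ)⁻¹)^(k-1))
            = (∑ j ∈ Icc 2 m, ((2:ℝ)⁻¹)^(j-1))
              * (6 * Q^m * ∑ k ∈ Icc 1 m, ((2:ℝ)⁻¹)^(k-1)) := by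
          calc ∑ k ∈ Icc 1 m, ∑ j ∈ Icc 2 m, 6 * Q^m * (((2:ℝ)⁻¹)^(j-1) * ((2:ℝ)⁻¹)^(k-1))
              = ∑ k ∈ Icc 1 m,
                (∑ j ∈ Icc 2 m, ((2:ℝ)⁻¹)^(j-1)) * (6 * Q^m * ((2:ℝ)⁻¹)^(k-1)) :=
                Finset.sum_congr rfl fun k _ => hinner k
            _ = (∑ j ∈ Icc 2 m, ((2:ℝ)⁻¹)^(j-1))
                * ∑ k ∈ Icc 1 m, (6 * Q^m * ((2:ℝ)⁻¹)^(k-1)) := (Finset.mul_sum _ _ _).symm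
            _ = (∑ j ∈ Icc 2 m, ((2:ℝ)⁻¹)^(j-1))
                * (6 * Q^m * ∑ k ∈ Icc 1 m, ((2:ℝ)⁻¹)^(k-1)) := by
                congr 1
                rw [Finset.mul_sum]
        rw [hre]
        have s1 := half_shift_two m
        have s2 := half_shift_one m
        have s1nn : (0:ℝ) ≤ ∑ j ∈ Icc 2 m, ((2:ℝ)⁻¹)^(j-1) :=
          Finset.sum_nonneg fun _ _ => by positivity
        have s2nn : (0:ℝ) ≤ ∑ k ∈ Icc 1 m, ((2:ℝ)⁻¹)^(k-1) :=
          Finset.sum_nonneg fun _ _ => by positivity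
        have hP : (0:ℝ) ≤ 6 * Q^m * ∑ k ∈ Icc 1 m, ((2:ℝ)⁻¹)^(k-1) :=
          mul_nonneg (by positivity) s2nn
        have h1 : (∑ j ∈ Icc 2 m, ((2:ℝ)⁻¹)^(j-1))
            * (6 * Q^m * ∑ k ∈ Icc 1 m, ((2:ℝ)⁻¹)^(k-1))
            ≤ 1 * (6 * Q^m * ∑ k ∈ Icc 1 m, ((2:ℝ)⁻¹)^(k-1)) :=
          mul_le_mul_of_nonneg_right s1 hP
        have h2 : 6 * Q^m * (∑ k ∈ Icc 1 m, ((2:ℝ)⁻¹)^(k-1)) ≤ 6 * Q^m * 2 :=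
          mul_le_mul_of_nonneg_left s2 (by positivity)
        nlinarith [h1, h2]
      linarith
    -- combine
    have hdR : (2:ℝ) ≤ (d:ℝ) := by exact_mod_cast hd2
    have hfin : (d:ℝ) * ((m:ℝ) * (Nr Fq m d : ℝ)) ≤ (m:ℝ) * (6 * Q^m) := by
      have hsum : ∑ k ∈ Icc 1 m, ∑ j ∈ Icc 1 m, (B1 d m Q k j + B2 d m Q k j)
          = ∑ k ∈ Icc 1 m, ∑ j ∈ Icc 1 m, B1 d m Q k j
            + ∑ k ∈ Icc 1 m, ∑ j ∈ Icc 1 m, B2 d m Q k j := by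
        rw [← Finset.sum_add_distrib]
        refine Finset.sum_congr rfl fun k _ => ?_
        rw [← Finset.sum_add_distrib]
      have h2d : 2*(d:ℝ) ≤ (m:ℝ) := by exact_mod_cast hm2d
      have hQm : (0:ℝ) ≤ Q ^ m := by positivity
      calc (d:ℝ) * ((m:ℝ) * (Nr Fq m d : ℝ))
          ≤ ∑ k ∈ Icc 1 m, ∑ j ∈ Icc 1 m, (B1 d m Q k j + B2 d m Q k j) := main1
        _ = ∑ k ∈ Icc 1 m, ∑ j ∈ Icc 1 m, B1 d m Q k j
            + ∑ k ∈ Icc 1 m, ∑ j ∈ Icc 1 m, B2 d m Q k j := hsum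
        _ ≤ 2 * (d:ℝ) * Q ^ m + (6 * Q^m * ((m:ℝ) - 2*(d:ℝ) + 1) + 12 * Q^m) := by
            linarith [hsumB1, hsumB2]
        _ ≤ (m:ℝ) * (6 * Q^m) := by nlinarith
    have hmpos : (0:ℝ) < (m:ℝ) := by exact_mod_cast hm
    have hfin2 : (m:ℝ) * ((d:ℝ) * (Nr Fq m d : ℝ)) ≤ (m:ℝ) * (6 * Q^m) := by
      calc (m:ℝ) * ((d:ℝ) * (Nr Fq m d:ℝ)) = (d:ℝ) * ((m:ℝ) * (Nr Fq m d:ℝ)) := by ring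
        _ ≤ (m:ℝ) * (6 * Q^m) := hfin
    exact le_of_mul_le_mul_left hfin2 hmpos

lemma lower_bound (d : ℕ) (hd : 1 ≤ d) :
    ∀ m : ℕ, d ≤ m → (Fintype.card Fq : ℝ) ^ m ≤ 12 * (d:ℝ) * (Nr Fq m d : ℝ) := by
  intro m
  induction m using Nat.strong_induction_on with
  | _ m IH =>
  intro hdm
  have hm : 1 ≤ m := le_trans hd hdm
  have hq : 2 ≤ Fintype.card Fq := hq2
  set Q : ℝ := (Fintype.card Fq : ℝ) with hQdef
  have hQ2 : (2:ℝ) ≤ Q := by rw [hQdef]; exact_mod_cast hq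
  have hQ1 : (1:ℝ) ≤ Q := by linarith
  have hQ0 : (0:ℝ) < Q := by linarith
  have raw := rough_lower_raw (Fq := Fq) m d hd hdm
  have hnotmem : m ∉ Icc d (m - d) := by
    rw [Finset.mem_Icc]
    omega
  rw [Finset.sum_insert hnotmem, Nat.sub_self, Nr_zero] at raw
  have rawR : (pik Fq m : ℝ) * ((m:ℝ) * 1) + ∑ k ∈ Icc d (m - d),
      (pik Fq k : ℝ) * ((k:ℝ) * (Nr Fq (m - k) d : ℝ)) ≤ (m:ℝ) * (Nr Fq m d : ℝ) := by
    exact_mod_cast raw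
  have hmain : Q ^ m ≤ 2 * ((m:ℝ) * (pik Fq m : ℝ)) := by
    rw [hQdef]
    exact_mod_cast pik_lower_half (Fq := Fq) hm
  have hbulk : ∀ k ∈ Icc d (m - d),
      Q^m - 2 * Q ^ (m - (k+1)/2)
        ≤ 12 * (d:ℝ) * ((pik Fq k : ℝ) * ((k:ℝ) * (Nr Fq (m - k) d : ℝ))) := by
    intro k hk
    rw [Finset.mem_Icc] at hk
    have hk1 : 1 ≤ k := le_trans hd hk.1
    have hkm : k ≤ m := by omega
    have hIH : Q ^ (m - k) ≤ 12 * (d:ℝ) * (Nr Fq (m - k) d : ℝ) :=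
      IH (m - k) (by omega) (by omega)
    have hpl : Q ^ k ≤ (k:ℝ) * (pik Fq k : ℝ) + 2 * Q ^ (k / 2) := by
      rw [hQdef]
      exact_mod_cast pik_lower (Fq := Fq) hk1
    have he1 : Q ^ k * Q ^ (m - k) = Q ^ m := by
      rw [← pow_add]; congr 1; omega
    have he2 : Q ^ (k/2) * Q ^ (m - k) = Q ^ (m - (k+1)/2) := by
      rw [← pow_add]; congr 1; omega
    have hdecomp : Q^m - 2*Q^(m - (k+1)/2) = (Q ^ k - 2 * Q ^ (k/2)) * Q ^ (m - k) := by
      rw [sub_mul, he1, mul_assoc, he2]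
    rcases le_or_gt (2 * Q ^ (k/2)) (Q ^ k) with hsign | hsign
    · have h1 : Q ^ k - 2 * Q ^ (k/2) ≤ (k:ℝ) * (pik Fq k : ℝ) := by linarith
      have hstep : (Q ^ k - 2 * Q ^ (k/2)) * Q ^ (m - k)
          ≤ ((k:ℝ) * (pik Fq k : ℝ)) * (12 * (d:ℝ) * (Nr Fq (m - k) d : ℝ)) := by
        apply mul_le_mul h1 hIH (by positivity) (by positivity)
      calc Q^m - 2*Q^(m - (k+1)/2) = (Q ^ k - 2 * Q ^ (k/2)) * Q ^ (m - k) := hdecomp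
        _ ≤ ((k:ℝ) * (pik Fq k : ℝ)) * (12 * (d:ℝ) * (Nr Fq (m - k) d : ℝ)) := hstep
        _ = 12 * (d:ℝ) * ((pik Fq k : ℝ) * ((k:ℝ) * (Nr Fq (m - k) d : ℝ))) := by ring
    · have hneg : Q^m - 2*Q^(m - (k+1)/2) ≤ 0 := by
        rw [hdecomp]
        have hp : (0:ℝ) ≤ Q^(m-k) := by positivity
        nlinarith
      have hnn : (0:ℝ) ≤ 12 * (d:ℝ) *
          ((pik Fq k:ℝ) * ((k:ℝ) * (Nr Fq (m - k) d : ℝ))) := by positivity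
      linarith
  have herr : ((Icc d (m-d)).card : ℝ) * Q^m - 5 * Q^m
      ≤ ∑ k ∈ Icc d (m - d), (Q^m - 2 * Q ^ (m - (k+1)/2)) := by
    rw [Finset.sum_sub_distrib]
    have h1 : ∑ _k ∈ Icc d (m-d), Q^m = ((Icc d (m-d)).card : ℝ) * Q^m := by
      rw [Finset.sum_const, nsmul_eq_mul]
    rw [h1]
    have h2 : ∑ k ∈ Icc d (m-d), 2 * Q ^ (m - (k+1)/2) ≤ 5 * Q^m := by
      have hterm : ∀ k ∈ Icc d (m-d), 2 * Q ^ (m - (k+1)/2) ≤ 2 * Q^m * ((71:ℝ)/100)^k := by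
        intro k hk
        rw [Finset.mem_Icc] at hk
        have hk1 : 1 ≤ k := le_trans hd hk.1
        have hkm : k ≤ m := by omega
        have he : Q ^ (m - (k+1)/2) * Q ^ ((k+1)/2) = Q ^ m := by
          rw [← pow_add]; congr 1; omega
        have h2c : (2:ℝ)^((k+1)/2) ≤ Q^((k+1)/2) := pow_le_pow_left₀ (by norm_num) hQ2 _
        have hcp : ((2:ℝ)⁻¹)^((k+1)/2) ≤ ((71:ℝ)/100)^k := ceil_pow k
        have key : Q ^ (m - (k+1)/2) ≤ Q^m * ((2:ℝ)⁻¹)^((k+1)/2) := by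
          rw [inv_pow]
          calc Q ^ (m - (k+1)/2)
              = Q ^ (m - (k+1)/2) * (2:ℝ)^((k+1)/2) * ((2:ℝ)^((k+1)/2))⁻¹ := by
                field_simp
            _ ≤ Q^m * ((2:ℝ)^((k+1)/2))⁻¹ := by
                apply mul_le_mul_of_nonneg_right ?_ (by positivity)
                calc Q ^ (m - (k+1)/2) * (2:ℝ)^((k+1)/2)
                    ≤ Q ^ (m - (k+1)/2) * Q^((k+1)/2) :=
                      mul_le_mul_of_nonneg_left h2c (by positivity)
                  _ = Q ^ m := he
        have key2 : Q^m * ((2:ℝ)⁻¹)^((k+1)/2) ≤ Q^m * ((71:ℝ)/100)^k :=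
          mul_le_mul_of_nonneg_left hcp (by positivity)
        nlinarith [key, key2]
      calc ∑ k ∈ Icc d (m-d), 2 * Q ^ (m - (k+1)/2)
          ≤ ∑ k ∈ Icc d (m-d), 2 * Q^m * ((71:ℝ)/100)^k := Finset.sum_le_sum hterm
        _ ≤ ∑ k ∈ Icc 1 m, 2 * Q^m * ((71:ℝ)/100)^k := by
            apply Finset.sum_le_sum_of_subset_of_nonneg
            · intro k hk
              rw [Finset.mem_Icc] at hk ⊢
              omega
            · intro k _ _
              positivity
        _ = 2 * Q^m * ∑ k ∈ Icc 1 m, ((71:ℝ)/100)^k := by rw [Finset.mul_sum]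
        _ ≤ 2 * Q^m * (5/2) := mul_le_mul_of_nonneg_left (sum_71_Icc m) (by positivity)
        _ = 5 * Q^m := by ring
    linarith
  have hcard : (m:ℝ) + 5 ≤ ((Icc d (m-d)).card : ℝ) + 6*(d:ℝ) := by
    have hN : m + 5 ≤ (Icc d (m-d)).card + 6*d := by
      rw [Nat.card_Icc]
      omega
    exact_mod_cast hN
  have hQm : (0:ℝ) ≤ Q^m := by positivity
  have step1 : ∑ k ∈ Icc d (m - d), (Q^m - 2 * Q ^ (m - (k+1)/2))
      ≤ 12*(d:ℝ) * ∑ k ∈ Icc d (m-d), (pik Fq k : ℝ) * ((k:ℝ) * (Nr Fq (m - k) d : ℝ)) := by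
    rw [Finset.mul_sum]
    exact Finset.sum_le_sum hbulk
  have hmainterm : 6*(d:ℝ)*Q^m ≤ 12*(d:ℝ)*((pik Fq m:ℝ) * ((m:ℝ)*1)) := by
    have hd0 : (0:ℝ) ≤ (d:ℝ) := Nat.cast_nonneg d
    nlinarith [hmain]
  have h12 : 12*(d:ℝ) * ((pik Fq m : ℝ) * ((m:ℝ) * 1) + ∑ k ∈ Icc d (m - d),
      (pik Fq k : ℝ) * ((k:ℝ) * (Nr Fq (m - k) d : ℝ)))
      ≤ 12*(d:ℝ) * ((m:ℝ) * (Nr Fq m d : ℝ)) :=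
    mul_le_mul_of_nonneg_left rawR (by positivity)
  have final : (m:ℝ) * Q^m ≤ 12*(d:ℝ) * ((m:ℝ) * (Nr Fq m d : ℝ)) := by
    calc (m:ℝ)*Q^m
        ≤ 6*(d:ℝ)*Q^m + (((Icc d (m-d)).card : ℝ) * Q^m - 5*Q^m) := by nlinarith [hcard, hQm]
      _ ≤ 12*(d:ℝ)*((pik Fq m:ℝ)*((m:ℝ)*1))
          + 12*(d:ℝ) * ∑ k ∈ Icc d (m-d), (pik Fq k : ℝ) * ((k:ℝ) * (Nr Fq (m - k) d : ℝ)) :=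
          add_le_add hmainterm (le_trans herr step1)
      _ = 12*(d:ℝ) * ((pik Fq m : ℝ) * ((m:ℝ) * 1) + ∑ k ∈ Icc d (m - d),
          (pik Fq k : ℝ) * ((k:ℝ) * (Nr Fq (m - k) d : ℝ))) := by ring
      _ ≤ 12*(d:ℝ) * ((m:ℝ) * (Nr Fq m d : ℝ)) := h12
  have hmpos : (0:ℝ) < (m:ℝ) := by exact_mod_cast hm
  have final2 : (m:ℝ) * Q^m ≤ (m:ℝ) * (12*(d:ℝ) * (Nr Fq m d : ℝ)) := by
    calc (m:ℝ)*Q^m ≤ 12*(d:ℝ)*((m:ℝ)*(Nr Fq m d:ℝ)) := final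
      _ = (m:ℝ) * (12*(d:ℝ)*(Nr Fq m d:ℝ)) := by ring
  exact le_of_mul_le_mul_left final2 hmpos


end RoughAux

/-- The number of monic polynomials of degree `n` over `F_q` with no prime factor of degree
less than `d` is `≍ q^n / d` for `1 ≤ d ≤ n`, uniformly in the prime power `q`. -/
theorem rough_count :
    ∃ c C : ℝ, 0 < c ∧ 0 < C ∧
      ∀ (Fq : Type) [Field Fq] [Fintype Fq], ∀ n d : ℕ, 1 ≤ d → d ≤ n →
        c * (Fintype.card Fq : ℝ) ^ n / (d : ℝ) ≤ ((RoughSet Fq n d).ncard : ℝ) ∧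
        ((RoughSet Fq n d).ncard : ℝ) ≤ C * (Fintype.card Fq : ℝ) ^ n / (d : ℝ) := by
  refine ⟨1/12, 6, by norm_num, by norm_num, ?_⟩
  intro Fq _ _ n d hd hdn
  have hset : RoughSet Fq n d = ↑(RoughAux.roughs Fq n d) := by
    ext F
    rw [Finset.mem_coe, RoughAux.mem_roughs]
    rfl
  have hncard : ((RoughSet Fq n d).ncard : ℝ) = (RoughAux.Nr Fq n d : ℝ) := by
    rw [hset, Set.ncard_coe_finset, RoughAux.Nr]
  have hupper := RoughAux.upper_bound (Fq := Fq) d hd n (le_trans hd hdn)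
  have hlower := RoughAux.lower_bound (Fq := Fq) d hd n hdn
  have hd0 : (0:ℝ) < (d:ℝ) := by exact_mod_cast hd
  rw [hncard]
  constructor
  · rw [div_le_iff₀ hd0]
    nlinarith [hlower]
  · rw [le_div_iff₀ hd0]
    nlinarith [hupper]
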